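/- arXiv:1506.00859 — 3 statements merged into one kernel-verified Lean document; each statement's English description precedes it below -/
import Mathlib

section
/- Let p ≥ 1 and let φ₀ ∈ ℝᵖ be such that the polynomial φ₀(z) = 1 − φ₀,₁ z − ⋯ − φ₀,ₚ zᵖ has no zeros in the closed complex unit disk {z : |z| ≤ 1}. Then there exist ε > 0, c ∈ (0,1) and K > 0 such that for every v ∈ ℝᵖ with max₁≤j≤p |vⱼ − φ₀,ⱼ| ≤ ε, the polynomial φ_v(z) = 1 − v₁ z − ⋯ − vₚ zᵖ has no zeros in the closed unit disk, the reciprocal 1/φ_v(z) admits a power series expansion ∑_{ℓ=0}^∞ π_ℓ(v) z^ℓ valid for |z| ≤ 1, and |π_j(v)| ≤ K cʲ for all j ≥ 0. -/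
open scoped BigOperators

/-- The autoregressive polynomial `φ_v(z) = 1 - v₁ z - ⋯ - vₚ zᵖ`, evaluated at `z ∈ ℂ`. -/
noncomputable def arEval (p : ℕ) (v : Fin p → ℝ) (z : ℂ) : ℂ :=
  1 - ∑ j : Fin p, (v j : ℂ) * z ^ ((j : ℕ) + 1)

/-- The coefficients `π_ℓ(v)` of the power-series expansion of the reciprocal `1/φ_v(z)`
at `z = 0` (the Taylor coefficients, realized as the coefficients of the formal
multiplicative inverse, which is legitimate since `φ_v(0) = 1 ≠ 0`). -/
noncomputable def arPiCoeff (p : ℕ) (v : Fin p → ℝ) (ℓ : ℕ) : ℝ :=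
  PowerSeries.coeff (R := ℝ) ℓ
    ((1 - ∑ j : Fin p, PowerSeries.monomial (R := ℝ) ((j : ℕ) + 1) (v j))⁻¹)

/-!
Nonvanishing of `φ_v` on a closed disc of radius `r > 1` is an open condition on `v` (tube
lemma), and by compactness `1/φ_v` is bounded there by some `M`, uniformly for `v` near `φ₀`.
Cauchy's estimate on that disc then gives `|π_n(v)| ≤ M r⁻ⁿ`. The Taylor coefficients of `1/φ_v`
are the coefficients of the formal inverse because multiplying the Taylor series by the
polynomial `φ_v` yields a power series summing to `1`, and power series expansions are unique.
-/

open PowerSeries Metric Filter Topology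

namespace PowerSeries

theorem hasSum_coeff_monomial_mul_mul_pow {R : Type*} [CommRing R] [TopologicalSpace R]
    [IsTopologicalRing R] {A : R⟦X⟧} {z F : R} (h : HasSum (fun n => coeff n A * z ^ n) F)
    (k : ℕ) (c : R) :
    HasSum (fun n => coeff n (monomial k c * A) * z ^ n) (c * z ^ k * F) := by
  have hlow : ∀ i < k, coeff i (monomial k c * A) = 0 := fun i hi => by
    rw [monomial_eq_C_mul_X_pow, mul_assoc, coeff_C_mul, coeff_X_pow_mul', if_neg (by omega),
      mul_zero]
  rw [← hasSum_nat_add_iff' k, Finset.sum_eq_zero fun i hi => by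
    rw [hlow i (Finset.mem_range.mp hi), zero_mul], sub_zero]
  refine (h.mul_left (c * z ^ k)).congr_fun fun n => ?_
  rw [monomial_eq_C_mul_X_pow, mul_assoc, coeff_C_mul, coeff_X_pow_mul, pow_add]
  ring

theorem eq_of_eventually_hasSum_coeff_mul_pow {𝕜 : Type*} [NontriviallyNormedField 𝕜]
    {A B : 𝕜⟦X⟧} {g : 𝕜 → 𝕜}
    (hA : ∀ᶠ z in 𝓝 0, HasSum (fun n => coeff n A * z ^ n) (g z))
    (hB : ∀ᶠ z in 𝓝 0, HasSum (fun n => coeff n B * z ^ n) (g z)) : A = B := by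
  have hasFPowerSeriesAt {C : 𝕜⟦X⟧}
      (hC : ∀ᶠ z in 𝓝 0, HasSum (fun n => coeff n C * z ^ n) (g z)) :
      HasFPowerSeriesAt g (FormalMultilinearSeries.ofScalars 𝕜 fun n => coeff n C) 0 :=
    hasFPowerSeriesAt_iff.2 <| hC.mono fun z hz => by
      simpa [FormalMultilinearSeries.coeff_ofScalars, mul_comm] using hz
  ext n
  exact congrFun (FormalMultilinearSeries.ofScalars_series_injective 𝕜 𝕜
    ((hasFPowerSeriesAt hA).eq_formalMultilinearSeries (hasFPowerSeriesAt hB))) n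

end PowerSeries

section Autoregressive

variable {p : ℕ}

noncomputable def arSeries (p : ℕ) (v : Fin p → ℝ) : ℝ⟦X⟧ :=
  1 - ∑ j : Fin p, monomial ((j : ℕ) + 1) (v j)

theorem constantCoeff_arSeries (v : Fin p → ℝ) : constantCoeff (arSeries p v) = 1 := by
  simp [arSeries, ← coeff_zero_eq_constantCoeff_apply, coeff_monomial,
    -coeff_zero_eq_constantCoeff]

theorem map_arSeries (v : Fin p → ℝ) :
    map (algebraMap ℝ ℂ) (arSeries p v) = 1 - ∑ j : Fin p, monomial ((j : ℕ) + 1) (v j : ℂ) := by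
  ext n
  simp [arSeries, coeff_monomial, apply_ite]

theorem continuous_arEval : Continuous fun q : (Fin p → ℝ) × ℂ => arEval p q.1 q.2 := by
  unfold arEval
  fun_prop

theorem differentiable_arEval (v : Fin p → ℝ) : Differentiable ℂ (arEval p v) := by
  unfold arEval
  fun_prop

theorem hasSum_coeff_map_arSeries_mul {v : Fin p → ℝ} {A : ℂ⟦X⟧} {z F : ℂ}
    (h : HasSum (fun n => coeff n A * z ^ n) F) :
    HasSum (fun n => coeff n (map (algebraMap ℝ ℂ) (arSeries p v) * A) * z ^ n)
      (arEval p v z * F) := by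
  have hterms := hasSum_sum (s := Finset.univ) fun (j : Fin p) _ =>
    hasSum_coeff_monomial_mul_mul_pow h ((j : ℕ) + 1) (v j : ℂ)
  have hsum : arEval p v z * F = F - ∑ j : Fin p, (v j : ℂ) * z ^ ((j : ℕ) + 1) * F := by
    simp only [arEval, sub_mul, one_mul, Finset.sum_mul]
  rw [hsum]
  refine (h.sub hterms).congr_fun fun n => ?_
  rw [map_arSeries, sub_mul, one_mul, Finset.sum_mul, map_sub, map_sum, sub_mul, Finset.sum_mul]

theorem coeff_eq_arPiCoeff_of_hasSum {v : Fin p → ℝ} {A : ℂ⟦X⟧}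
    (hA : ∀ᶠ z in 𝓝 0, HasSum (fun n => coeff n A * z ^ n) (arEval p v z)⁻¹) (n : ℕ) :
    coeff n A = arPiCoeff p v n := by
  have hne : ∀ᶠ z in 𝓝 0, arEval p v z ≠ 0 :=
    (differentiable_arEval v).continuous.continuousAt.eventually_ne (by simp [arEval])
  have hmul : map (algebraMap ℝ ℂ) (arSeries p v) * A = 1 := by
    refine eq_of_eventually_hasSum_coeff_mul_pow (g := fun _ => 1)
      ((hne.and hA).mono fun z ⟨hz, hzA⟩ => ?_) (Eventually.of_forall fun z => ?_)
    · simpa [mul_inv_cancel₀ hz] using hasSum_coeff_map_arSeries_mul (v := v) hzA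
    · simpa using hasSum_single (f := fun n => coeff n (1 : ℂ⟦X⟧) * z ^ n) 0
        fun n hn => by simp [coeff_one, hn]
  have hA_eq : A = map (algebraMap ℝ ℂ) (arSeries p v)⁻¹ := calc
    A = map (algebraMap ℝ ℂ) (arSeries p v)⁻¹ * (map (algebraMap ℝ ℂ) (arSeries p v) * A) := by
      rw [← mul_assoc, ← map_mul, PowerSeries.inv_mul_cancel _ (by simp [constantCoeff_arSeries]),
        map_one, one_mul]
    _ = _ := by rw [hmul, mul_one]
  rw [hA_eq, coeff_map, Complex.coe_algebraMap]
  rfl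

theorem arPiCoeff_eq_iteratedDeriv {v : Fin p → ℝ} {r : ℝ} (hr : 0 < r)
    (hv : ∀ z ∈ ball (0 : ℂ) r, arEval p v z ≠ 0) (n : ℕ) :
    (arPiCoeff p v n : ℂ) =
      (n.factorial : ℂ)⁻¹ * iteratedDeriv n (fun z => (arEval p v z)⁻¹) 0 := by
  have hdiff : DifferentiableOn ℂ (fun z => (arEval p v z)⁻¹) (ball 0 r) :=
    (differentiable_arEval v).differentiableOn.fun_inv hv
  rw [← coeff_eq_arPiCoeff_of_hasSum (eventually_of_mem (ball_mem_nhds 0 hr) fun z hz => ?_),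
    coeff_mk]
  simpa [mul_comm, mul_assoc, mul_left_comm] using Complex.hasSum_taylorSeries_on_ball hdiff hz

theorem hasSum_arPiCoeff_mul_pow {v : Fin p → ℝ} {r : ℝ}
    (hv : ∀ z ∈ ball (0 : ℂ) r, arEval p v z ≠ 0) {z : ℂ} (hz : z ∈ ball 0 r) :
    HasSum (fun n => (arPiCoeff p v n : ℂ) * z ^ n) (arEval p v z)⁻¹ := by
  simp_rw [arPiCoeff_eq_iteratedDeriv (pos_of_mem_ball hz) hv]
  simpa [mul_comm, mul_assoc, mul_left_comm] using
    Complex.hasSum_taylorSeries_on_ball ((differentiable_arEval v).differentiableOn.fun_inv hv) hz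

theorem abs_arPiCoeff_le {v : Fin p → ℝ} {r M : ℝ} (hr : 0 < r)
    (hv : ∀ z ∈ closedBall (0 : ℂ) r, arEval p v z ≠ 0)
    (hM : ∀ z ∈ sphere (0 : ℂ) r, ‖(arEval p v z)⁻¹‖ ≤ M) (n : ℕ) :
    |arPiCoeff p v n| ≤ M / r ^ n := by
  have hcauchy := Complex.norm_iteratedDeriv_le_of_forall_mem_sphere_norm_le n hr
    (((differentiable_arEval v).differentiableOn.fun_inv hv).diffContOnCl_ball subset_rfl) hM
  rw [← Real.norm_eq_abs, ← Complex.norm_real,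
    arPiCoeff_eq_iteratedDeriv hr fun z hz => hv z (ball_subset_closedBall hz), norm_mul, norm_inv,
    Complex.norm_natCast]
  calc (n.factorial : ℝ)⁻¹ * ‖iteratedDeriv n (fun z => (arEval p v z)⁻¹) 0‖
      ≤ (n.factorial : ℝ)⁻¹ * (n.factorial * M / r ^ n) := by gcongr
    _ = M / r ^ n := by field_simp

theorem exists_forall_arEval_ne_zero {φ0 : Fin p → ℝ}
    (h0 : ∀ z : ℂ, ‖z‖ ≤ 1 → arEval p φ0 z ≠ 0) :
    ∃ ε > 0, ∃ r > 1, ∀ v ∈ closedBall φ0 ε, ∀ z ∈ closedBall (0 : ℂ) r, arEval p v z ≠ 0 := by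
  have hopen : IsOpen {q : (Fin p → ℝ) × ℂ | arEval p q.1 q.2 ≠ 0} :=
    isOpen_ne_fun continuous_arEval continuous_const
  obtain ⟨U, V, hU, hV, hφU, hBV, hUV⟩ := generalized_tube_lemma (isCompact_singleton (x := φ0))
    (isCompact_closedBall (0 : ℂ) 1) hopen fun q ⟨hq₁, hq₂⟩ => by
      rw [Set.mem_ofPred_eq, Set.mem_singleton_iff.1 hq₁]
      exact h0 q.2 (mem_closedBall_zero_iff.1 hq₂)
  obtain ⟨ε, hε, hεU⟩ := nhds_basis_closedBall.mem_iff.1 (hU.mem_nhds (hφU rfl))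
  obtain ⟨δ, hδ, hδV⟩ := (isCompact_closedBall (0 : ℂ) 1).exists_cthickening_subset_open hV hBV
  rw [cthickening_closedBall hδ.le zero_le_one] at hδV
  exact ⟨ε, hε, δ + 1, by linarith, fun v hv z hz => hUV (Set.mk_mem_prod (hεU hv) (hδV hz))⟩

end Autoregressive

theorem statement0_general (p : ℕ) (φ0 : Fin p → ℝ)
    (h0 : ∀ z : ℂ, ‖z‖ ≤ 1 → arEval p φ0 z ≠ 0) :
    ∃ ε > (0 : ℝ), ∃ c ∈ Set.Ioo (0 : ℝ) 1, ∃ K > (0 : ℝ),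
      ∀ v : Fin p → ℝ, (∀ j, |v j - φ0 j| ≤ ε) →
        (∀ z : ℂ, ‖z‖ ≤ 1 → arEval p v z ≠ 0) ∧
        (∀ z : ℂ, ‖z‖ ≤ 1 →
          HasSum (fun ℓ : ℕ => (arPiCoeff p v ℓ : ℂ) * z ^ ℓ) (arEval p v z)⁻¹) ∧
        (∀ j : ℕ, |arPiCoeff p v j| ≤ K * c ^ j) := by
  obtain ⟨ε, hε, r, hr, hne⟩ := exists_forall_arEval_ne_zero h0
  obtain ⟨M, hM⟩ := ((isCompact_closedBall φ0 ε).prod (isCompact_closedBall (0 : ℂ) r)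
    ).exists_bound_of_continuousOn (f := fun q => (arEval p q.1 q.2)⁻¹)
    (continuous_arEval.continuousOn.inv₀ fun q hq => hne q.1 hq.1 q.2 hq.2)
  have hM1 : 1 ≤ M := by
    simpa [arEval] using hM (φ0, 0) ⟨mem_closedBall_self hε.le, mem_closedBall_self (by linarith)⟩
  refine ⟨ε, hε, r⁻¹, ⟨by positivity, inv_lt_one_of_one_lt₀ hr⟩, M, by linarith, fun v hv => ?_⟩
  have hv : v ∈ closedBall φ0 ε := (dist_pi_le_iff hε.le).2 fun j => by
    simpa [Real.dist_eq] using hv j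
  have hunit {z : ℂ} (hz : ‖z‖ ≤ 1) : z ∈ ball 0 r := by
    rw [mem_ball_zero_iff]
    linarith
  refine ⟨fun z hz => hne v hv z (ball_subset_closedBall (hunit hz)),
    fun z hz => hasSum_arPiCoeff_mul_pow (fun z hz => hne v hv z (ball_subset_closedBall hz))
      (hunit hz), fun j => ?_⟩
  rw [inv_pow, ← div_eq_mul_inv]
  exact abs_arPiCoeff_le (by linarith) (hne v hv)
    (fun z hz => hM (v, z) ⟨hv, sphere_subset_closedBall hz⟩) j

theorem statement0 (p : ℕ) (hp : 1 ≤ p) (φ0 : Fin p → ℝ)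
    (h0 : ∀ z : ℂ, ‖z‖ ≤ 1 → arEval p φ0 z ≠ 0) :
    ∃ ε > (0 : ℝ), ∃ c ∈ Set.Ioo (0 : ℝ) 1, ∃ K > (0 : ℝ),
      ∀ v : Fin p → ℝ, (∀ j, |v j - φ0 j| ≤ ε) →
        (∀ z : ℂ, ‖z‖ ≤ 1 → arEval p v z ≠ 0) ∧
        (∀ z : ℂ, ‖z‖ ≤ 1 →
          HasSum (fun ℓ : ℕ => (arPiCoeff p v ℓ : ℂ) * z ^ ℓ) (arEval p v z)⁻¹) ∧
        (∀ j : ℕ, |arPiCoeff p v j| ≤ K * c ^ j) :=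
  statement0_general p φ0 h0
end

section
/- Let q ≥ 1 and let θ₀ ∈ ℝ^q be such that the polynomial θ₀(z) = 1 + θ₀,₁ z + ⋯ + θ₀,q z^q has no zeros in the closed complex unit disk. Then there exist ε > 0, c ∈ (0,1) and K > 0 such that for all u₁, u₂ ∈ ℝ^q with max_j |u₁,ⱼ − θ₀,ⱼ| ≤ ε and max_j |u₂,ⱼ − θ₀,ⱼ| ≤ ε, and all j ≥ 1, the Taylor coefficients of the reciprocals satisfy |ψ_j(u₁) − ψ_j(u₂)| ≤ K · (max_k |u₁,k − u₂,k|) · j c^{j−1}. -/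
open scoped BigOperators

/-- The moving-average polynomial `θ_u(z) = 1 + u₁ z + ⋯ + u_q z^q`, evaluated at `z ∈ ℂ`. -/
noncomputable def maEval (q : ℕ) (u : Fin q → ℝ) (z : ℂ) : ℂ :=
  1 + ∑ j : Fin q, (u j : ℂ) * z ^ ((j : ℕ) + 1)

/-- The coefficients `ψ_ℓ(u)` of the power-series expansion of the reciprocal `1/θ_u(z)`
at `z = 0` (the Taylor coefficients, realized as the coefficients of the formal
multiplicative inverse, which is legitimate since `θ_u(0) = 1 ≠ 0`). -/
noncomputable def maPsiCoeff (q : ℕ) (u : Fin q → ℝ) (ℓ : ℕ) : ℝ :=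
  PowerSeries.coeff (R := ℝ) ℓ
    ((1 + ∑ j : Fin q, PowerSeries.monomial (R := ℝ) ((j : ℕ) + 1) (u j))⁻¹)

/-!
The formal inverse of `θ_u` is the Taylor series of `1/θ_u` at `0`: the crude bound
`|ψ_n(u)| ≤ (1 + ∑ |u_j|)^n` makes the series converge near `0`, and its Cauchy product with
`θ_u` is `1`. Since `θ₀` has no zeros on a closed disk of radius `R > 1`, for `u` close to `θ₀`
the modulus of `θ_u` stays above some `m > 0` on that disk, and Cauchy's estimate gives
`|ψ_n(u)| ≤ m⁻¹ R⁻ⁿ` uniformly in `u`. Finally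
`θ_{u₁}⁻¹ - θ_{u₂}⁻¹ = θ_{u₁}⁻¹ θ_{u₂}⁻¹ (θ_{u₂} - θ_{u₁})`: the product of the two inverses has
coefficients at most `M² (n + 1) cⁿ`, and the last factor is a polynomial of degree at most `q`
with coefficients bounded by `max_k |u₁ k - u₂ k|`.
-/

open PowerSeries Finset Metric

section

variable {q : ℕ}

lemma PowerSeries.coeff_mul_monomial {R : Type*} [CommSemiring R] (f : R⟦X⟧) (k n : ℕ) (a : R) :
    coeff n (f * monomial k a) = if k ≤ n then coeff (n - k) f * a else 0 := by
  rw [monomial_eq_C_mul_X_pow, ← mul_assoc, coeff_mul_X_pow']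
  split_ifs <;> simp [coeff_mul_C]

lemma coeff_mul_sum_monomial_succ {R : Type*} [CommSemiring R] (f : R⟦X⟧) (v : Fin q → R)
    (n : ℕ) :
    coeff n (f * ∑ j : Fin q, monomial ((j : ℕ) + 1) (v j)) =
      ∑ j : Fin q, if (j : ℕ) + 1 ≤ n then coeff (n - ((j : ℕ) + 1)) f * v j else 0 := by
  simp only [mul_sum, map_sum, coeff_mul_monomial]

noncomputable def maSeries (q : ℕ) (u : Fin q → ℝ) : ℝ⟦X⟧ :=
  1 + ∑ j : Fin q, monomial ((j : ℕ) + 1) (u j)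

lemma maPsiCoeff_eq_coeff_inv (u : Fin q → ℝ) (n : ℕ) :
    maPsiCoeff q u n = coeff n (maSeries q u)⁻¹ := rfl

lemma constantCoeff_maSeries (u : Fin q → ℝ) : constantCoeff (maSeries q u) = 1 := by
  simp [maSeries, ← coeff_zero_eq_constantCoeff_apply, -coeff_zero_eq_constantCoeff,
    coeff_monomial]

lemma constantCoeff_maSeries_ne_zero (u : Fin q → ℝ) : constantCoeff (maSeries q u) ≠ 0 := by
  simp [constantCoeff_maSeries]

lemma coeff_maSeries_inv_of_ne_zero (u : Fin q → ℝ) {n : ℕ} (hn : n ≠ 0) :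
    coeff n (maSeries q u)⁻¹ =
      -coeff n ((maSeries q u)⁻¹ * ∑ j : Fin q, monomial ((j : ℕ) + 1) (u j)) := by
  have hinv : (maSeries q u)⁻¹ * (1 + ∑ j : Fin q, monomial ((j : ℕ) + 1) (u j)) = 1 :=
    PowerSeries.inv_mul_cancel _ (constantCoeff_maSeries_ne_zero u)
  have h := congrArg (coeff n) hinv
  rw [mul_add, mul_one, map_add, coeff_one, if_neg hn] at h
  linear_combination h

lemma abs_maPsiCoeff_le (u : Fin q → ℝ) (n : ℕ) :
    |maPsiCoeff q u n| ≤ (1 + ∑ j : Fin q, |u j|) ^ n := by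
  set A := ∑ j : Fin q, |u j|
  have hA : 0 ≤ A := sum_nonneg fun j _ => abs_nonneg (u j)
  induction n using Nat.strong_induction_on with
  | _ n ih =>
    rcases Nat.eq_zero_or_pos n with rfl | hn
    · simp [maPsiCoeff_eq_coeff_inv, constantCoeff_inv, constantCoeff_maSeries]
    have hterm : ∀ j : Fin q,
        |if (j : ℕ) + 1 ≤ n then maPsiCoeff q u (n - ((j : ℕ) + 1)) * u j else 0| ≤
          (1 + A) ^ (n - 1) * |u j| := by
      intro j
      split_ifs with hj
      · rw [abs_mul]
        gcongr
        exact (ih _ (by omega)).trans (pow_le_pow_right₀ (by linarith) (by omega))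
      · simp only [abs_zero]; positivity
    calc |maPsiCoeff q u n|
        ≤ ∑ j : Fin q, (1 + A) ^ (n - 1) * |u j| := by
          rw [maPsiCoeff_eq_coeff_inv, coeff_maSeries_inv_of_ne_zero u hn.ne', abs_neg,
            coeff_mul_sum_monomial_succ]
          exact (abs_sum_le_sum_abs _ _).trans (sum_le_sum fun j _ => hterm j)
      _ = (1 + A) ^ (n - 1) * A := by rw [← mul_sum]
      _ ≤ (1 + A) ^ (n - 1) * (1 + A) := by gcongr; linarith
      _ = (1 + A) ^ n := by rw [← pow_succ]; congr 1; omega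

lemma hasSum_coeff_monomial (k : ℕ) (a : ℝ) (y : ℂ) :
    HasSum (fun n => ((coeff n (monomial k a) : ℝ) : ℂ) * y ^ n) (a * y ^ k) := by
  convert hasSum_single k fun n hn => ?_ using 1
  · simp
  · simp [coeff_monomial, hn]

lemma hasSum_coeff_maSeries (u : Fin q → ℝ) (y : ℂ) :
    HasSum (fun n => ((coeff n (maSeries q u) : ℝ) : ℂ) * y ^ n) (maEval q u y) := by
  have h1 := hasSum_coeff_monomial 0 1 y
  have h2 := hasSum_sum (s := univ) fun (j : Fin q) _ =>
    hasSum_coeff_monomial ((j : ℕ) + 1) (u j) y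
  simp only [monomial_zero_eq_C_apply, map_one, Complex.ofReal_one, pow_zero, mul_one] at h1
  convert h1.add h2 using 1
  · ext n
    simp [maSeries, add_mul, sum_mul]
  · rfl

lemma coeff_maSeries_of_lt (u : Fin q → ℝ) {n : ℕ} (hn : q < n) : coeff n (maSeries q u) = 0 := by
  have : ∀ j : Fin q, n ≠ (j : ℕ) + 1 := fun j => by omega
  simp [maSeries, coeff_monomial, this, show n ≠ 0 by omega]

lemma summable_norm_coeff_maSeries (u : Fin q → ℝ) (y : ℂ) :
    Summable fun n => ‖((coeff n (maSeries q u) : ℝ) : ℂ) * y ^ n‖ :=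
  summable_of_ne_finset_zero (s := range (q + 1)) fun n hn => by
    rw [coeff_maSeries_of_lt u (by simpa using hn)]
    simp

lemma hasSum_coeff_mul {f g : ℝ⟦X⟧} {y a b : ℂ}
    (hf : HasSum (fun n => ((coeff n f : ℝ) : ℂ) * y ^ n) a)
    (hg : HasSum (fun n => ((coeff n g : ℝ) : ℂ) * y ^ n) b)
    (hf' : Summable fun n => ‖((coeff n f : ℝ) : ℂ) * y ^ n‖)
    (hg' : Summable fun n => ‖((coeff n g : ℝ) : ℂ) * y ^ n‖) :
    HasSum (fun n => ((coeff n (f * g) : ℝ) : ℂ) * y ^ n) (a * b) := by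
  have hterm : ∀ n, ((coeff n (f * g) : ℝ) : ℂ) * y ^ n =
      ∑ kl ∈ antidiagonal n,
        ((coeff kl.1 f : ℝ) : ℂ) * y ^ kl.1 * (((coeff kl.2 g : ℝ) : ℂ) * y ^ kl.2) := by
    intro n
    rw [coeff_mul, Complex.ofReal_sum, sum_mul]
    refine sum_congr rfl fun kl hkl => ?_
    rw [← mem_antidiagonal.1 hkl, pow_add]
    push_cast
    ring
  simp only [hterm]
  rw [← hf.tsum_eq, ← hg.tsum_eq, tsum_mul_tsum_eq_tsum_sum_antidiagonal_of_summable_norm hf' hg']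
  exact (summable_norm_sum_mul_antidiagonal_of_summable_norm hf' hg').of_norm.hasSum

lemma hasSum_maPsiCoeff (u : Fin q → ℝ) {y : ℂ} (hy : ‖y‖ < (1 + ∑ j : Fin q, |u j|)⁻¹) :
    HasSum (fun n => (maPsiCoeff q u n : ℂ) * y ^ n) (maEval q u y)⁻¹ := by
  set A := ∑ j : Fin q, |u j|
  have hA : 0 < 1 + A := by positivity
  have hyA : (1 + A) * ‖y‖ < 1 := by
    simpa [mul_inv_cancel₀ hA.ne'] using mul_lt_mul_of_pos_left hy hA
  have hψ : Summable fun n => ‖(maPsiCoeff q u n : ℂ) * y ^ n‖ := by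
    refine Summable.of_nonneg_of_le (fun n => norm_nonneg _) (fun n => ?_)
      (summable_geometric_of_lt_one (by positivity) hyA)
    rw [norm_mul, norm_pow, Complex.norm_real, Real.norm_eq_abs, mul_pow]
    gcongr
    exact abs_maPsiCoeff_le u n
  have hprod := hasSum_coeff_mul (g := (maSeries q u)⁻¹) (hasSum_coeff_maSeries u y)
    hψ.of_norm.hasSum (summable_norm_coeff_maSeries u y) hψ
  rw [PowerSeries.mul_inv_cancel _ (constantCoeff_maSeries_ne_zero u)] at hprod
  have hone : HasSum (fun n => ((coeff n (1 : ℝ⟦X⟧) : ℝ) : ℂ) * y ^ n) 1 := by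
    simpa using hasSum_coeff_monomial 0 1 y
  exact eq_inv_of_mul_eq_one_right (hprod.unique hone) ▸ hψ.of_norm.hasSum

open FormalMultilinearSeries in
lemma hasFPowerSeriesAt_inv_maEval (u : Fin q → ℝ) :
    HasFPowerSeriesAt (fun z => (maEval q u z)⁻¹) (ofScalars ℂ fun n => (maPsiCoeff q u n : ℂ))
      0 := by
  set A := ∑ j : Fin q, |u j|
  have hA : 0 < 1 + A := by positivity
  refine ⟨ENNReal.ofReal (1 + A)⁻¹, ?_, ENNReal.ofReal_pos.2 (inv_pos.2 hA), fun {y} hy => ?_⟩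
  · refine le_radius_of_bound _ 1 fun n => ?_
    rw [ofScalars_norm, Complex.norm_real, Real.norm_eq_abs, Real.coe_toNNReal _ (by positivity)]
    calc |maPsiCoeff q u n| * (1 + A)⁻¹ ^ n
        ≤ (1 + A) ^ n * (1 + A)⁻¹ ^ n := by gcongr; exact abs_maPsiCoeff_le u n
      _ = 1 := by rw [inv_pow, mul_inv_cancel₀ (by positivity)]
  · rw [mem_eball, edist_zero_right, ← ofReal_norm,
      ENNReal.ofReal_lt_ofReal_iff (inv_pos.2 hA)] at hy
    simpa [ofScalars_apply_eq, mul_comm] using hasSum_maPsiCoeff u hy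

open FormalMultilinearSeries in
lemma norm_le_of_hasFPowerSeriesAt_ofScalars {g : ℂ → ℂ} {a : ℕ → ℂ} {R C : ℝ} (hR : 0 < R)
    (hg : HasFPowerSeriesAt g (ofScalars ℂ a) 0) (hd : DiffContOnCl ℂ g (ball 0 R))
    (hC : ∀ z ∈ sphere 0 R, ‖g z‖ ≤ C) (n : ℕ) :
    ‖a n‖ ≤ C / R ^ n := by
  have ha : a = fun n => iteratedDeriv n g 0 / n.factorial :=
    ofScalars_series_injective (𝕜 := ℂ) (E := ℂ)
      (hg.eq_formalMultilinearSeries hg.analyticAt.hasFPowerSeriesAt)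
  rw [ha, norm_div, Complex.norm_natCast, div_le_iff₀ (by positivity)]
  calc ‖iteratedDeriv n g 0‖
      ≤ n.factorial * C / R ^ n :=
        Complex.norm_iteratedDeriv_le_of_forall_mem_sphere_norm_le n hR hd hC
    _ = C / R ^ n * n.factorial := by ring

lemma differentiable_maEval (u : Fin q → ℝ) : Differentiable ℂ (maEval q u) := by
  unfold maEval
  fun_prop

lemma norm_maEval_sub_le {u v : Fin q → ℝ} {ε R : ℝ} (huv : ∀ j, |u j - v j| ≤ ε) (hR : 1 ≤ R)
    {z : ℂ} (hz : ‖z‖ ≤ R) :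
    ‖maEval q u z - maEval q v z‖ ≤ q * ε * R ^ q := by
  have hdiff : maEval q u z - maEval q v z = ∑ j, ((u j - v j : ℝ) : ℂ) * z ^ ((j : ℕ) + 1) := by
    simp only [maEval, add_sub_add_left_eq_sub, ← sum_sub_distrib, Complex.ofReal_sub, sub_mul]
  calc ‖maEval q u z - maEval q v z‖
      ≤ ∑ j : Fin q, ‖((u j - v j : ℝ) : ℂ) * z ^ ((j : ℕ) + 1)‖ := hdiff ▸ norm_sum_le _ _
    _ ≤ ∑ _j : Fin q, ε * R ^ q := sum_le_sum fun j _ => by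
        rw [norm_mul, norm_pow, Complex.norm_real, Real.norm_eq_abs]
        exact mul_le_mul (huv j) ((pow_le_pow_left₀ (norm_nonneg z) hz _).trans
          (pow_le_pow_right₀ hR j.2)) (by positivity) ((abs_nonneg _).trans (huv j))
    _ = q * ε * R ^ q := by simp [mul_assoc]

lemma exists_one_lt_maEval_ne_zero {θ0 : Fin q → ℝ} (h0 : ∀ z : ℂ, ‖z‖ ≤ 1 → maEval q θ0 z ≠ 0) :
    ∃ R > 1, ∀ z : ℂ, ‖z‖ ≤ R → maEval q θ0 z ≠ 0 := by
  obtain ⟨δ, hδ, hsub⟩ := (isCompact_closedBall (0 : ℂ) 1).exists_cthickening_subset_open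
    (isOpen_compl_singleton.preimage (differentiable_maEval θ0).continuous)
    (fun z hz => h0 z (by simpa using hz))
  refine ⟨1 + δ, by linarith, fun z hz => hsub ?_⟩
  rw [cthickening_closedBall hδ.le zero_le_one, add_comm]
  simpa using hz

lemma exists_uniform_lower_bound_norm_maEval {θ0 : Fin q → ℝ}
    (h0 : ∀ z : ℂ, ‖z‖ ≤ 1 → maEval q θ0 z ≠ 0) :
    ∃ R > 1, ∃ m > (0 : ℝ), ∃ ε > (0 : ℝ), ∀ u : Fin q → ℝ, (∀ j, |u j - θ0 j| ≤ ε) →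
      ∀ z : ℂ, ‖z‖ ≤ R → m ≤ ‖maEval q u z‖ := by
  obtain ⟨R, hR, hne⟩ := exists_one_lt_maEval_ne_zero h0
  obtain ⟨z₀, hz₀, hmin⟩ := (isCompact_closedBall (0 : ℂ) R).exists_isMinOn
    (nonempty_closedBall.2 (by linarith)) (differentiable_maEval θ0).continuous.norm.continuousOn
  set m := ‖maEval q θ0 z₀‖
  have hm : 0 < m := norm_pos_iff.2 (hne z₀ (by simpa using hz₀))
  refine ⟨R, hR, m / 2, by positivity, m / (2 * (q + 1) * R ^ q), by positivity,
    fun u hu z hz => ?_⟩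
  have hpert := norm_maEval_sub_le hu hR.le hz
  have hsmall : q * (m / (2 * (q + 1) * R ^ q)) * R ^ q ≤ m / 2 := by
    have : 0 < R ^ q := by positivity
    field_simp
    linarith
  have hθ0 : m ≤ ‖maEval q θ0 z‖ := hmin (by simpa using hz)
  have := norm_sub_norm_le (maEval q θ0 z) (maEval q u z)
  rw [norm_sub_rev] at this
  linarith

theorem exists_uniform_geometric_bound_maPsiCoeff {θ0 : Fin q → ℝ}
    (h0 : ∀ z : ℂ, ‖z‖ ≤ 1 → maEval q θ0 z ≠ 0) :
    ∃ ε > (0 : ℝ), ∃ c ∈ Set.Ioo (0 : ℝ) 1, ∃ M > (0 : ℝ), ∀ u : Fin q → ℝ,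
      (∀ j, |u j - θ0 j| ≤ ε) → ∀ n, |maPsiCoeff q u n| ≤ M * c ^ n := by
  obtain ⟨R, hR, m, hm, ε, hε, hlow⟩ := exists_uniform_lower_bound_norm_maEval h0
  refine ⟨ε, hε, R⁻¹, ⟨by positivity, inv_lt_one_of_one_lt₀ hR⟩, m⁻¹, by positivity,
    fun u hu n => ?_⟩
  have hne : ∀ z ∈ closedBall (0 : ℂ) R, maEval q u z ≠ 0 := fun z hz =>
    norm_pos_iff.1 (hm.trans_le (hlow u hu z (by simpa using hz)))
  have hd : DiffContOnCl ℂ (fun z => (maEval q u z)⁻¹) (ball 0 R) :=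
    ((differentiable_maEval u).differentiableOn.inv hne).diffContOnCl_ball subset_rfl
  have hC : ∀ z ∈ sphere (0 : ℂ) R, ‖(maEval q u z)⁻¹‖ ≤ m⁻¹ := fun z hz => by
    rw [norm_inv]
    exact inv_anti₀ hm (hlow u hu z (by simp_all))
  have := norm_le_of_hasFPowerSeriesAt_ofScalars (by positivity) (hasFPowerSeriesAt_inv_maEval u)
    hd hC n
  rwa [Complex.norm_real, Real.norm_eq_abs, div_eq_mul_inv, ← inv_pow] at this

lemma abs_coeff_mul_le_of_geometric {f g : ℝ⟦X⟧} {A B c : ℝ}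
    (hf : ∀ n, |coeff n f| ≤ A * c ^ n) (hg : ∀ n, |coeff n g| ≤ B * c ^ n) (n : ℕ) :
    |coeff n (f * g)| ≤ A * B * (n + 1) * c ^ n := by
  rw [coeff_mul]
  calc |∑ kl ∈ antidiagonal n, coeff kl.1 f * coeff kl.2 g|
      ≤ ∑ kl ∈ antidiagonal n, |coeff kl.1 f| * |coeff kl.2 g| :=
        (abs_sum_le_sum_abs _ _).trans_eq (by simp only [abs_mul])
    _ ≤ ∑ _kl ∈ antidiagonal n, A * B * c ^ n := sum_le_sum fun kl hkl => by
        rw [← mem_antidiagonal.1 hkl, pow_add]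
        calc |coeff kl.1 f| * |coeff kl.2 g|
            ≤ A * c ^ kl.1 * (B * c ^ kl.2) :=
              mul_le_mul (hf _) (hg _) (abs_nonneg _) ((abs_nonneg _).trans (hf _))
          _ = A * B * (c ^ kl.1 * c ^ kl.2) := by ring
    _ = A * B * (n + 1) * c ^ n := by
        rw [sum_const, Nat.card_antidiagonal, nsmul_eq_mul]
        push_cast
        ring

lemma sum_monomial_succ_sub (u v : Fin q → ℝ) :
    ∑ j : Fin q, monomial ((j : ℕ) + 1) (v j - u j) = maSeries q v - maSeries q u := by
  simp only [maSeries, map_sub, sum_sub_distrib, add_sub_add_left_eq_sub]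

lemma maSeries_inv_sub_inv (u v : Fin q → ℝ) :
    (maSeries q u)⁻¹ - (maSeries q v)⁻¹ =
      (maSeries q u)⁻¹ * (maSeries q v)⁻¹ * ∑ j : Fin q, monomial ((j : ℕ) + 1) (v j - u j) := by
  have hu := PowerSeries.inv_mul_cancel _ (constantCoeff_maSeries_ne_zero u)
  have hv := PowerSeries.inv_mul_cancel _ (constantCoeff_maSeries_ne_zero v)
  rw [sum_monomial_succ_sub]
  linear_combination (maSeries q v)⁻¹ * hu - (maSeries q u)⁻¹ * hv

lemma abs_coeff_mul_sum_monomial_succ_le {F : ℝ⟦X⟧} {L c δ : ℝ} (hc : 0 < c) (hc1 : c ≤ 1)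
    (hF : ∀ n, |coeff n F| ≤ L * (n + 1) * c ^ n) {v : Fin q → ℝ} (hv : ∀ j, |v j| ≤ δ) (n : ℕ) :
    |coeff n (F * ∑ j : Fin q, monomial ((j : ℕ) + 1) (v j))| ≤
      q * L * c⁻¹ ^ (q - 1) * δ * n * c ^ (n - 1) := by
  have hL : 0 ≤ L := by simpa using (abs_nonneg _).trans (hF 0)
  have hterm : ∀ j : Fin q,
      |if (j : ℕ) + 1 ≤ n then coeff (n - ((j : ℕ) + 1)) F * v j else 0| ≤
        L * c⁻¹ ^ (q - 1) * δ * n * c ^ (n - 1) := by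
    intro j
    have hδ : 0 ≤ δ := (abs_nonneg _).trans (hv j)
    split_ifs with hj
    · have hpow : c ^ (n - ((j : ℕ) + 1)) ≤ c ^ (n - 1) * c⁻¹ ^ (q - 1) := by
        rw [show n - ((j : ℕ) + 1) = n - 1 - j by omega, pow_sub₀ c hc.ne' (by omega), ← inv_pow]
        gcongr
        · exact one_le_inv₀ hc |>.2 hc1
        · omega
      have hlen : ((n - ((j : ℕ) + 1) : ℕ) : ℝ) + 1 ≤ n := by
        rw [Nat.cast_sub hj]
        push_cast
        linarith
      calc |coeff (n - ((j : ℕ) + 1)) F * v j|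
          ≤ L * (((n - ((j : ℕ) + 1) : ℕ) : ℝ) + 1) * c ^ (n - ((j : ℕ) + 1)) * δ := by
            rw [abs_mul]
            exact mul_le_mul (hF _) (hv j) (abs_nonneg _) (by positivity)
        _ ≤ L * n * (c ^ (n - 1) * c⁻¹ ^ (q - 1)) * δ := by gcongr
        _ = L * c⁻¹ ^ (q - 1) * δ * n * c ^ (n - 1) := by ring
    · rw [abs_zero]
      positivity
  rw [coeff_mul_sum_monomial_succ]
  calc _ ≤ ∑ _j : Fin q, L * c⁻¹ ^ (q - 1) * δ * n * c ^ (n - 1) :=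
        (abs_sum_le_sum_abs _ _).trans (sum_le_sum fun j _ => hterm j)
    _ = q * L * c⁻¹ ^ (q - 1) * δ * n * c ^ (n - 1) := by simp [mul_assoc]

end

theorem statement2_general (q : ℕ) (θ0 : Fin q → ℝ)
    (h0 : ∀ z : ℂ, ‖z‖ ≤ 1 → maEval q θ0 z ≠ 0) :
    ∃ ε > (0 : ℝ), ∃ c ∈ Set.Ioo (0 : ℝ) 1, ∃ K > (0 : ℝ),
      ∀ u₁ u₂ : Fin q → ℝ,
        (∀ j, |u₁ j - θ0 j| ≤ ε) → (∀ j, |u₂ j - θ0 j| ≤ ε) →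
          ∀ j : ℕ, 1 ≤ j →
            |maPsiCoeff q u₁ j - maPsiCoeff q u₂ j| ≤
              K * (⨆ k : Fin q, |u₁ k - u₂ k|) * j * c ^ (j - 1) := by
  obtain ⟨ε, hε, c, ⟨hc0, hc1⟩, M, hM, hψ⟩ := exists_uniform_geometric_bound_maPsiCoeff h0
  refine ⟨ε, hε, c, ⟨hc0, hc1⟩, (q + 1) * (M * M) * c⁻¹ ^ (q - 1), by positivity,
    fun u₁ u₂ hu₁ hu₂ j _ => ?_⟩
  set δ := ⨆ k : Fin q, |u₁ k - u₂ k|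
  have hδ : ∀ k, |u₂ k - u₁ k| ≤ δ := fun k =>
    abs_sub_comm (u₁ k) (u₂ k) ▸
      le_ciSup (f := fun k => |u₁ k - u₂ k|) (Set.finite_range _).bddAbove k
  have hδ0 : 0 ≤ δ := Real.iSup_nonneg fun k => abs_nonneg _
  have hprod := abs_coeff_mul_le_of_geometric (f := (maSeries q u₁)⁻¹) (g := (maSeries q u₂)⁻¹)
    (hψ u₁ hu₁) (hψ u₂ hu₂)
  rw [maPsiCoeff_eq_coeff_inv, maPsiCoeff_eq_coeff_inv, ← map_sub, maSeries_inv_sub_inv]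
  calc _ ≤ q * (M * M) * c⁻¹ ^ (q - 1) * δ * j * c ^ (j - 1) :=
        abs_coeff_mul_sum_monomial_succ_le hc0 hc1.le hprod hδ j
    _ ≤ (q + 1) * (M * M) * c⁻¹ ^ (q - 1) * δ * j * c ^ (j - 1) := by gcongr; linarith

theorem statement2 (q : ℕ) (hq : 1 ≤ q) (θ0 : Fin q → ℝ)
    (h0 : ∀ z : ℂ, ‖z‖ ≤ 1 → maEval q θ0 z ≠ 0) :
    ∃ ε > (0 : ℝ), ∃ c ∈ Set.Ioo (0 : ℝ) 1, ∃ K > (0 : ℝ),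
      ∀ u₁ u₂ : Fin q → ℝ,
        (∀ j, |u₁ j - θ0 j| ≤ ε) → (∀ j, |u₂ j - θ0 j| ≤ ε) →
          ∀ j : ℕ, 1 ≤ j →
            |maPsiCoeff q u₁ j - maPsiCoeff q u₂ j| ≤
              K * (⨆ k : Fin q, |u₁ k - u₂ k|) * j * c ^ (j - 1) :=
  statement2_general q θ0 h0
end

section
/- Let p ≥ 1, let ψ₀, ψ₁, ψ₂, … and φ₁, …, φ_p be real numbers, and let m, k* ≥ 1 be integers. For an integer n let I(n) = 1 if n ≥ m + k* and I(n) = 0 otherwise. Then for every integer s with s ≥ p, setting t = m + k* + s, ∑_{ℓ=0}^{t−1} ψ_ℓ · [I(t−ℓ) − ∑_{j=1}^{p} φ_j · I(t−j−ℓ)] = (1 − ∑_{j=1}^{p} φ_j) · ∑_{ℓ=0}^{s−p} ψ_ℓ + ∑_{ℓ=0}^{p−1} ψ_{s−ℓ} · (1 − ∑_{j=1}^{ℓ} φ_j), where the inner sum ∑_{j=1}^{0} φ_j is empty (equal to 0). -/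
open scoped BigOperators

/-- The indicator `I(n) = 1` if `n ≥ m + k*` and `0` otherwise, for integers `n`. -/
noncomputable def ind (m kstar : ℕ) (n : ℤ) : ℝ :=
  if ((m : ℤ) + kstar) ≤ n then 1 else 0

/-!
Measured from `t = m + k* + s`, the indicator `I(t - a)` is just `[a ≤ s]`. The coefficient of `ψ ℓ`
is therefore `[ℓ ≤ s] - ∑_{1 ≤ j ≤ min p (s - ℓ)} φ j`: it vanishes for `ℓ > s`, equals
`1 - ∑_{j ≤ p} φ j` for `ℓ ≤ s - p`, and equals `1 - ∑_{j ≤ i} φ j` for the last `p` indices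
`ℓ = s - i`, `i < p`.
-/

open Finset

section Reindexing

variable {M : Type*} [AddCommMonoid M]

theorem Finset.sum_range_eq_sum_range_of_eq_zero {f : ℕ → M} {n N : ℕ} (hnN : n ≤ N)
    (hf : ∀ ℓ, n ≤ ℓ → f ℓ = 0) : ∑ ℓ ∈ range N, f ℓ = ∑ ℓ ∈ range n, f ℓ := by
  obtain ⟨k, rfl⟩ := Nat.exists_eq_add_of_le hnN
  rw [sum_range_add, sum_eq_zero fun i _ => hf _ (Nat.le_add_right n i), add_zero]

theorem Finset.sum_range_succ_eq_add_sum_range_reflect (f : ℕ → M) {p s : ℕ} (hps : p ≤ s) :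
    ∑ ℓ ∈ range (s + 1), f ℓ = ∑ ℓ ∈ range (s - p + 1), f ℓ + ∑ i ∈ range p, f (s - i) := by
  obtain ⟨r, rfl⟩ := Nat.exists_eq_add_of_le hps
  rw [show p + r + 1 = r + 1 + p by omega, sum_range_add, show p + r - p = r by omega,
    ← sum_range_reflect (fun i => f (p + r - i)) p]
  refine congrArg _ (sum_congr rfl fun i hi => ?_)
  rw [mem_range] at hi
  congr 1
  omega

end Reindexing

theorem ind_sub (m kstar s : ℕ) (a : ℤ) :
    ind m kstar ((m + kstar + s : ℤ) - a) = if a ≤ s then 1 else 0 := by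
  unfold ind
  congr 1
  exact propext (by omega)

theorem sum_Icc_ite_add_le (φ : ℕ → ℝ) (p ℓ s : ℕ) :
    ∑ j ∈ Icc 1 p, (if j + ℓ ≤ s then φ j else 0) = ∑ j ∈ Icc 1 (min p (s - ℓ)), φ j := by
  rw [← sum_filter]
  congr 1
  ext j
  simp only [mem_filter, mem_Icc]
  omega

theorem statement10_general (p : ℕ) (ψ φ : ℕ → ℝ) (m kstar : ℕ)
    (hm : 1 ≤ m) (s : ℕ) (hs : p ≤ s) :
    ∑ ℓ ∈ Finset.range (m + kstar + s),
        ψ ℓ * (ind m kstar ((m + kstar + s : ℤ) - ℓ)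
          - ∑ j ∈ Finset.Icc 1 p, φ j * ind m kstar ((m + kstar + s : ℤ) - j - ℓ))
      = (1 - ∑ j ∈ Finset.Icc 1 p, φ j) * (∑ ℓ ∈ Finset.range (s - p + 1), ψ ℓ)
        + ∑ ℓ ∈ Finset.range p, ψ (s - ℓ) * (1 - ∑ j ∈ Finset.Icc 1 ℓ, φ j) := by
  set c : ℕ → ℝ := fun ℓ => (if ℓ ≤ s then 1 else 0) - ∑ j ∈ Icc 1 (min p (s - ℓ)), φ j
  have hcoeff : ∀ ℓ : ℕ, ind m kstar ((m + kstar + s : ℤ) - ℓ)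
      - ∑ j ∈ Icc 1 p, φ j * ind m kstar ((m + kstar + s : ℤ) - j - ℓ) = c ℓ := by
    intro ℓ
    simp only [sub_sub, ind_sub, mul_ite, mul_one, mul_zero, c, ← sum_Icc_ite_add_le]
    norm_cast
  simp only [hcoeff]
  rw [sum_range_eq_sum_range_of_eq_zero (n := s + 1) (by omega) fun ℓ hℓ => by
      simp [c, show ¬ ℓ ≤ s by omega, show s - ℓ = 0 by omega],
    sum_range_succ_eq_add_sum_range_reflect _ hs, mul_sum]
  congr 1
  · refine sum_congr rfl fun ℓ hℓ => ?_
    rw [mem_range] at hℓ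
    simp [c, show ℓ ≤ s by omega, show min p (s - ℓ) = p by omega, mul_comm]
  · refine sum_congr rfl fun i hi => ?_
    rw [mem_range] at hi
    simp [c, show s - (s - i) = i by omega, show min p i = i by omega]

theorem statement10 (p : ℕ) (hp : 1 ≤ p) (ψ φ : ℕ → ℝ) (m kstar : ℕ)
    (hm : 1 ≤ m) (hk : 1 ≤ kstar) (s : ℕ) (hs : p ≤ s) :
    ∑ ℓ ∈ Finset.range (m + kstar + s),
        ψ ℓ * (ind m kstar ((m + kstar + s : ℤ) - ℓ)
          - ∑ j ∈ Finset.Icc 1 p, φ j * ind m kstar ((m + kstar + s : ℤ) - j - ℓ))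
      = (1 - ∑ j ∈ Finset.Icc 1 p, φ j) * (∑ ℓ ∈ Finset.range (s - p + 1), ψ ℓ)
        + ∑ ℓ ∈ Finset.range p, ψ (s - ℓ) * (1 - ∑ j ∈ Finset.Icc 1 ℓ, φ j) :=
  statement10_general p ψ φ m kstar hm s hs
end
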